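/- Let k be an algebraically closed field of characteristic zero and let H \in k[X,Y] be a polynomial of prime total degree that is a weak variable in k[X,Y], i.e., there exists G \in k[X,Y] with J_{(X,Y)}(H,G) a nonzero constant. Then the degree form of H (the sum of its terms of top total degree) is a power of a linear form, up to a constant factor. -/

import Mathlib

/-!
Let `F`, `Γ` be the degree forms of `H`, `G`, of degrees `p`, `q`. The top-degree part of
`J(H, G) = c` is `J(F, Γ) = 0`. Dehomogenizing, `f = F(X, 1)` and `g = Γ(X, 1)` satisfy
`q f' g = p f g'` by Euler's identity, so the Wronskian of `g ^ p` and `f ^ q` vanishes and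
`f ^ q = μ g ^ p`. If `p ∤ q`, every root multiplicity of `f` is a multiple of the prime `p`, and
`deg f ≤ p` leaves only `f = u (X - r) ^ p` or `f` constant: `F` is a constant times a `p`-th
power of a linear form. If `q = p m`, the same relation gives `Γ = λ F ^ m`; then `G - λ H ^ m`
still has Jacobian `c` with `H` but smaller degree, and we induct on `deg G`.
-/

open scoped Polynomial

namespace Polynomial

lemma wronskian_pow_pow {R : Type*} [CommRing R] (a b : R[X]) {m n : ℕ} (hm : m ≠ 0)
    (hn : n ≠ 0) :
    wronskian (a ^ m) (b ^ n)
      = a ^ (m - 1) * b ^ (n - 1) * (n * a * derivative b - m * derivative a * b) := by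
  rw [wronskian, derivative_pow, derivative_pow]
  obtain ⟨m, rfl⟩ := Nat.exists_eq_succ_of_ne_zero hm
  obtain ⟨n, rfl⟩ := Nat.exists_eq_succ_of_ne_zero hn
  simp only [Nat.succ_sub_one, pow_succ, map_natCast]
  ring

variable {k : Type*} [Field k]

lemma exists_eq_C_mul_of_wronskian_eq_zero [CharZero k] {a b : k[X]} (ha : a ≠ 0)
    (h : wronskian a b = 0) : ∃ μ : k, b = C μ * a := by
  classical
  set d := gcd b a
  have hd : d ≠ 0 := gcd_ne_zero_of_right ha
  obtain ⟨A, B, hdA, hdB, hcop⟩ : ∃ A B, a = d * A ∧ b = d * B ∧ IsCoprime A B :=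
    ⟨a / d, b / d, (EuclideanDomain.mul_div_cancel' hd (gcd_dvd_right b a)).symm,
      (EuclideanDomain.mul_div_cancel' hd (gcd_dvd_left b a)).symm,
      (isCoprime_div_gcd_div_gcd ha).symm⟩
  have hAB : wronskian A B = 0 := by
    have : d * d * wronskian A B = 0 := by
      rw [← h, hdA, hdB]
      simp only [wronskian, derivative_mul]
      ring
    simpa [hd] using this
  obtain ⟨hA, hB⟩ := hcop.wronskian_eq_zero_iff.mp hAB
  rw [derivative_eq_zero] at hA hB
  rw [eq_C_of_natDegree_eq_zero hA] at hdA
  rw [eq_C_of_natDegree_eq_zero hB] at hdB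
  have hA0 : A.coeff 0 ≠ 0 := by rintro h0; simp [h0] at hdA; exact ha hdA
  refine ⟨B.coeff 0 / A.coeff 0, ?_⟩
  rw [hdA, hdB, mul_left_comm, ← C_mul, div_mul_cancel₀ _ hA0]

lemma exists_eq_C_mul_X_add_C_pow_of_pow_eq [IsAlgClosed k] {f g : k[X]} {p q : ℕ} {μ : k}
    (hp : p.Prime) (hpq : ¬ p ∣ q) (hdeg : f.natDegree ≤ p) (h : f ^ q = C μ * g ^ p) :
    ∃ u a b : k, f = C u * (C a * X + C b) ^ p := by
  classical
  by_cases hf0 : f.natDegree = 0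
  · exact ⟨f.coeff 0, 0, 1, by simpa using eq_C_of_natDegree_eq_zero hf0⟩
  have hf : f ≠ 0 := by rintro rfl; simp at hf0
  obtain ⟨r, hr⟩ := IsAlgClosed.exists_root f fun h0 => hf0 (natDegree_eq_of_degree_eq_some h0)
  have hμ : μ ≠ 0 := by rintro rfl; rw [C_0, zero_mul] at h; exact hf (pow_eq_zero_iff'.mp h).1
  have hcount : q * rootMultiplicity r f = p * rootMultiplicity r g := by
    simpa [roots_pow, roots_C_mul _ hμ, count_roots] using congrArg (fun P => P.roots.count r) h
  have hpe : p ∣ rootMultiplicity r f :=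
    (hp.dvd_mul.mp (Dvd.intro _ hcount.symm)).resolve_left hpq
  have hpos : 0 < rootMultiplicity r f := (rootMultiplicity_pos hf).mpr hr
  obtain ⟨c, hc⟩ := pow_rootMultiplicity_dvd f r
  have hc0 : c ≠ 0 := by rintro rfl; simp at hc; exact hf hc
  have hdegf : f.natDegree = rootMultiplicity r f + c.natDegree := by
    conv_lhs => rw [hc]
    rw [natDegree_mul (pow_ne_zero _ (X_sub_C_ne_zero r)) hc0, natDegree_pow, natDegree_X_sub_C,
      mul_one]
  have he : rootMultiplicity r f = p := by
    have := Nat.le_of_dvd hpos hpe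
    omega
  refine ⟨c.coeff 0, 1, -r, ?_⟩
  rw [hc, he, eq_C_of_natDegree_eq_zero (show c.natDegree = 0 by omega)]
  simp [sub_eq_add_neg, mul_comm]

lemma eq_C_mul_X_add_C_pow_or_eq_C_mul_pow [CharZero k] [IsAlgClosed k] {f g : k[X]} {p q : ℕ}
    (hp : p.Prime) (hq : q ≠ 0) (hf : f ≠ 0) (hg : g ≠ 0) (hdeg : f.natDegree ≤ p)
    (h : (q : k[X]) * derivative f * g - p * f * derivative g = 0) :
    (∃ u a b : k, f = C u * (C a * X + C b) ^ p) ∨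
      ∃ (m : ℕ) (c : k), q = p * m ∧ g = C c * f ^ m := by
  by_cases hpq : p ∣ q
  · right
    obtain ⟨m, rfl⟩ := hpq
    have hm : m ≠ 0 := by rintro rfl; simp at hq
    have hp0 : (p : k[X]) ≠ 0 := Nat.cast_ne_zero.mpr hp.ne_zero
    have hW : wronskian (f ^ m) (g ^ 1) = 0 := by
      rw [wronskian_pow_pow f g hm one_ne_zero]
      have : (p : k[X]) * (f * derivative g - m * derivative f * g) = 0 := by
        push_cast at h
        linear_combination -h
      simp [(mul_eq_zero.mp this).resolve_left hp0]
    obtain ⟨c, hc⟩ := exists_eq_C_mul_of_wronskian_eq_zero (pow_ne_zero m hf) hW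
    exact ⟨m, c, rfl, by simpa using hc⟩
  · left
    have hW : wronskian (g ^ p) (f ^ q) = 0 := by
      rw [wronskian_pow_pow g f hp.ne_zero hq]
      linear_combination (g ^ (p - 1) * f ^ (q - 1)) * h
    obtain ⟨μ, hμ⟩ := exists_eq_C_mul_of_wronskian_eq_zero (pow_ne_zero p hg) hW
    exact exists_eq_C_mul_X_add_C_pow_of_pow_eq hp hpq hdeg hμ

end Polynomial

namespace MvPolynomial

variable {σ R : Type*}

section CommSemiring

variable [CommSemiring R]

noncomputable def degreeForm (P : MvPolynomial σ R) : MvPolynomial σ R :=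
  homogeneousComponent P.totalDegree P

lemma isHomogeneous_degreeForm (P : MvPolynomial σ R) :
    (degreeForm P).IsHomogeneous P.totalDegree :=
  homogeneousComponent_isHomogeneous _ _

lemma degreeForm_ne_zero {P : MvPolynomial σ R} (hP : P ≠ 0) : degreeForm P ≠ 0 := by
  obtain ⟨d, hd, hdeg⟩ := Finset.exists_mem_eq_sup P.support (support_nonempty.mpr hP)
    fun s => s.sum fun _ e => e
  have hd' : d.degree = P.totalDegree := hdeg.symm
  intro h
  have := congrArg (coeff d) h
  rw [degreeForm, coeff_homogeneousComponent, if_pos hd', coeff_zero] at this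
  exact mem_support_iff.mp hd this

lemma homogeneousComponent_mul_of_totalDegree_le {A B : MvPolynomial σ R} {a b : ℕ}
    (hA : A.totalDegree ≤ a) (hB : B.totalDegree ≤ b) :
    homogeneousComponent (a + b) (A * B) = homogeneousComponent a A * homogeneousComponent b B := by
  classical
  ext d
  rw [coeff_homogeneousComponent, coeff_mul, coeff_mul]
  split_ifs with hd
  · refine Finset.sum_congr rfl fun x hx => ?_
    have hsum : x.1.degree + x.2.degree = a + b := by
      rw [← map_add, Finset.HasAntidiagonal.mem_antidiagonal.mp hx, hd]
    simp only [coeff_homogeneousComponent]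
    by_cases h1 : x.1.degree = a
    · rw [if_pos h1, if_pos (by omega)]
    · rw [if_neg h1, zero_mul]
      rcases Nat.lt_or_gt_of_ne h1 with h1 | h1
      · rw [coeff_eq_zero_of_totalDegree_lt (f := B) (by change _ < x.2.degree; omega), mul_zero]
      · rw [coeff_eq_zero_of_totalDegree_lt (f := A) (by change _ < x.1.degree; omega), zero_mul]
  · symm
    refine Finset.sum_eq_zero fun x hx => ?_
    simp only [coeff_homogeneousComponent]
    split_ifs with h1 h2 <;> try simp
    exact absurd (by rw [← Finset.HasAntidiagonal.mem_antidiagonal.mp hx, map_add, h1, h2]) hd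

lemma homogeneousComponent_pow_of_totalDegree_le {A : MvPolynomial σ R} {a : ℕ}
    (hA : A.totalDegree ≤ a) (m : ℕ) :
    homogeneousComponent (a * m) (A ^ m) = homogeneousComponent a A ^ m := by
  induction m with
  | zero => simp
  | succ m ih =>
    rw [pow_succ, pow_succ, ← ih, mul_add_one]
    exact homogeneousComponent_mul_of_totalDegree_le
      ((totalDegree_pow A m).trans (by rw [mul_comm]; gcongr)) hA

lemma homogeneousComponent_pderiv (n : ℕ) (i : σ) (P : MvPolynomial σ R) :
    homogeneousComponent n (pderiv i P) = pderiv i (homogeneousComponent (n + 1) P) := by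
  classical
  ext m
  simp only [coeff_homogeneousComponent, coeff_pderiv, map_add, Finsupp.degree_single,
    add_left_inj]
  split_ifs <;> simp

lemma totalDegree_pderiv_le (i : σ) (P : MvPolynomial σ R) :
    (pderiv i P).totalDegree ≤ P.totalDegree - 1 := by
  conv_lhs => rw [← sum_homogeneousComponent P, map_sum]
  refine totalDegree_finsetSum_le fun n hn => ?_
  refine ((homogeneousComponent_isHomogeneous n P).pderiv (i := i)).totalDegree_le.trans ?_
  have := Finset.mem_range.mp hn
  omega

end CommSemiring

section CommRing

variable [CommRing R]

lemma totalDegree_sub_lt_of_homogeneousComponent_eq {A B : MvPolynomial σ R} {n : ℕ}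
    (hn : 0 < n) (hA : A.totalDegree ≤ n) (hB : B.totalDegree ≤ n)
    (h : homogeneousComponent n A = homogeneousComponent n B) : (A - B).totalDegree < n := by
  rw [totalDegree, Finset.sup_lt_iff (by simpa)]
  intro d hd
  have hle := (le_totalDegree hd).trans ((totalDegree_sub A B).trans (max_le hA hB))
  refine lt_of_le_of_ne hle fun hdn => mem_support_iff.mp hd ?_
  have hdn' : d.degree = n := hdn
  have := congrArg (coeff d) h
  rw [coeff_homogeneousComponent, coeff_homogeneousComponent, if_pos hdn', if_pos hdn'] at this
  rw [coeff_sub, this, sub_self]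

noncomputable def jacobian (H G : MvPolynomial (Fin 2) R) : MvPolynomial (Fin 2) R :=
  pderiv 0 H * pderiv 1 G - pderiv 1 H * pderiv 0 G

lemma jacobian_C_right (H : MvPolynomial (Fin 2) R) (c : R) : jacobian H (C c) = 0 := by
  simp [jacobian]

lemma jacobian_sub_C_mul_pow_self (H G : MvPolynomial (Fin 2) R) (a : R) (m : ℕ) :
    jacobian H (G - C a * H ^ m) = jacobian H G := by
  simp only [jacobian, map_sub, pderiv_C_mul, pderiv_pow]
  ring

lemma homogeneousComponent_jacobian {H G : MvPolynomial (Fin 2) R} {p q : ℕ}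
    (hH : H.totalDegree ≤ p + 1) (hG : G.totalDegree ≤ q + 1) :
    homogeneousComponent (p + q) (jacobian H G)
      = jacobian (homogeneousComponent (p + 1) H) (homogeneousComponent (q + 1) G) := by
  have hH' (i : Fin 2) : (pderiv i H).totalDegree ≤ p :=
    (totalDegree_pderiv_le i H).trans (by omega)
  have hG' (i : Fin 2) : (pderiv i G).totalDegree ≤ q :=
    (totalDegree_pderiv_le i G).trans (by omega)
  rw [jacobian, jacobian, map_sub, homogeneousComponent_mul_of_totalDegree_le (hH' 0) (hG' 1),
    homogeneousComponent_mul_of_totalDegree_le (hH' 1) (hG' 0)]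
  simp only [homogeneousComponent_pderiv]

lemma jacobian_degreeForm_eq_zero {H G : MvPolynomial (Fin 2) R} {c : R}
    (hJ : jacobian H G = C c) (hH : 2 ≤ H.totalDegree) (hG : 1 ≤ G.totalDegree) :
    jacobian (degreeForm H) (degreeForm G) = 0 := by
  obtain ⟨p, hp⟩ : ∃ p, H.totalDegree = p + 1 + 1 := ⟨H.totalDegree - 2, by omega⟩
  obtain ⟨q, hq⟩ : ∃ q, G.totalDegree = q + 1 := ⟨G.totalDegree - 1, by omega⟩
  rw [degreeForm, degreeForm, hp, hq, ← homogeneousComponent_jacobian hp.le hq.le, hJ]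
  exact homogeneousComponent_eq_zero _ _ (by rw [totalDegree_C]; omega)

lemma totalDegree_pos_of_jacobian_eq_C {H G : MvPolynomial (Fin 2) R} {c : R} (hc : c ≠ 0)
    (hJ : jacobian H G = C c) : 0 < G.totalDegree := by
  by_contra h0
  rw [(totalDegree_eq_zero_iff_eq_C (p := G)).mp (by omega), jacobian_C_right] at hJ
  exact hc (C_eq_zero.mp hJ.symm)

lemma totalDegree_sub_C_mul_pow_lt {H G : MvPolynomial σ R} {m : ℕ} {a : R}
    (hG : 0 < G.totalDegree) (hm : G.totalDegree = H.totalDegree * m)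
    (h : degreeForm G = C a * degreeForm H ^ m) :
    (G - C a * H ^ m).totalDegree < G.totalDegree := by
  refine totalDegree_sub_lt_of_homogeneousComponent_eq hG le_rfl ?_ ?_
  · rw [C_mul', hm]
    exact (totalDegree_smul_le a _).trans ((totalDegree_pow H m).trans (by rw [mul_comm]))
  · rw [homogeneousComponent_C_mul, hm, homogeneousComponent_pow_of_totalDegree_le le_rfl, ← hm]
    exact h

end CommRing

section Dehomogenize

/-- On forms of degree `n` this inverts `Polynomial.homogenize · n`. -/
noncomputable def dehomogenize [CommSemiring R] : MvPolynomial (Fin 2) R →ₐ[R] R[X] :=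
  aeval ![Polynomial.X, 1]

variable [CommRing R] {F G : MvPolynomial (Fin 2) R} {n : ℕ}

lemma homogenize_dehomogenize (hF : F.IsHomogeneous n) : (dehomogenize F).homogenize n = F :=
  Polynomial.homogenize_eq_of_isHomogeneous hF rfl

lemma IsHomogeneous.eq_of_dehomogenize_eq (hF : F.IsHomogeneous n) (hG : G.IsHomogeneous n)
    (h : dehomogenize F = dehomogenize G) : F = G := by
  rw [← homogenize_dehomogenize hF, ← homogenize_dehomogenize hG, h]

lemma dehomogenize_ne_zero (hF : F.IsHomogeneous n) (h : F ≠ 0) : dehomogenize F ≠ 0 :=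
  fun h0 => h (by rw [← homogenize_dehomogenize hF, h0, Polynomial.homogenize_zero])

lemma natDegree_dehomogenize_le (P : MvPolynomial (Fin 2) R) :
    (dehomogenize P).natDegree ≤ P.totalDegree := by
  conv_lhs => rw [P.as_sum, map_sum]
  refine Polynomial.natDegree_sum_le_of_forall_le _ _ fun s hs => ?_
  rw [dehomogenize, aeval_monomial, Finsupp.prod_fintype _ _ (fun i => pow_zero _),
    Fin.prod_univ_two]
  simp only [Matrix.cons_val_zero, Matrix.cons_val_one, one_pow, mul_one, Polynomial.algebraMap_eq]
  exact (Polynomial.natDegree_C_mul_X_pow_le _ _).trans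
    ((Finsupp.le_degree 0 s).trans (le_totalDegree hs))

lemma dehomogenize_pderiv_zero (P : MvPolynomial (Fin 2) R) :
    dehomogenize (pderiv 0 P) = Polynomial.derivative (dehomogenize P) := by
  induction P using MvPolynomial.induction_on with
  | C a => simp
  | add P Q hP hQ => simp [hP, hQ]
  | mul_X P i hP =>
    rw [pderiv_mul, map_add, map_mul, map_mul, hP, map_mul, Polynomial.derivative_mul]
    fin_cases i <;> simp [dehomogenize]

lemma dehomogenize_pderiv_one (hF : F.IsHomogeneous n) :
    dehomogenize (pderiv 1 F)
      = (n : R[X]) * dehomogenize F - Polynomial.X * Polynomial.derivative (dehomogenize F) := by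
  have := congrArg dehomogenize hF.sum_X_mul_pderiv
  simp only [Fin.sum_univ_two, map_add, map_mul, map_nsmul, dehomogenize_pderiv_zero] at this
  simp only [dehomogenize, aeval_X, Matrix.cons_val_zero, Matrix.cons_val_one, one_mul,
    nsmul_eq_mul] at this ⊢
  linear_combination this

lemma dehomogenize_jacobian {p q : ℕ} (hF : F.IsHomogeneous p) (hG : G.IsHomogeneous q) :
    dehomogenize (jacobian F G)
      = (q : R[X]) * Polynomial.derivative (dehomogenize F) * dehomogenize G
        - (p : R[X]) * dehomogenize F * Polynomial.derivative (dehomogenize G) := by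
  rw [jacobian, map_sub, map_mul, map_mul, dehomogenize_pderiv_zero, dehomogenize_pderiv_zero,
    dehomogenize_pderiv_one hF, dehomogenize_pderiv_one hG]
  ring

end Dehomogenize

lemma degreeForm_eq_or_eq_C_mul_pow {k : Type*} [Field k] [IsAlgClosed k] [CharZero k]
    {H G : MvPolynomial (Fin 2) k} {c : k} (hp : H.totalDegree.Prime) (hc : c ≠ 0)
    (hJ : jacobian H G = C c) :
    (∃ u a b : k, degreeForm H = C u * (C a * X 0 + C b * X 1) ^ H.totalDegree) ∨
      ∃ (m : ℕ) (a : k), G.totalDegree = H.totalDegree * m ∧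
        degreeForm G = C a * degreeForm H ^ m := by
  have hG := totalDegree_pos_of_jacobian_eq_C hc hJ
  have hH0 : H ≠ 0 := by rintro rfl; exact Nat.not_prime_zero (by simpa using hp)
  have hG0 : G ≠ 0 := by rintro rfl; simp at hG
  have hF := isHomogeneous_degreeForm H
  have hΓ := isHomogeneous_degreeForm G
  have hrel := congrArg dehomogenize (jacobian_degreeForm_eq_zero hJ hp.two_le hG)
  rw [dehomogenize_jacobian hF hΓ, map_zero] at hrel
  rcases Polynomial.eq_C_mul_X_add_C_pow_or_eq_C_mul_pow hp hG.ne'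
      (dehomogenize_ne_zero hF (degreeForm_ne_zero hH0))
      (dehomogenize_ne_zero hΓ (degreeForm_ne_zero hG0))
      ((natDegree_dehomogenize_le _).trans hF.totalDegree_le) hrel with
    ⟨u, a, b, hf⟩ | ⟨m, a, hm, hg⟩
  · left
    have hlin : (C a * X 0 + C b * X 1 : MvPolynomial (Fin 2) k).IsHomogeneous 1 :=
      (isHomogeneous_C_mul_X a 0).add (isHomogeneous_C_mul_X b 1)
    refine ⟨u, a, b, hF.eq_of_dehomogenize_eq ?_ ?_⟩
    · simpa using (hlin.pow H.totalDegree).C_mul u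
    · rw [hf]
      simp [dehomogenize]
  · right
    refine ⟨m, a, hm, hΓ.eq_of_dehomogenize_eq ?_ ?_⟩
    · rw [hm]
      exact (hF.pow m).C_mul a
    · rw [hg]
      simp [dehomogenize]

end MvPolynomial

/-- if `H ∈ k[X,Y]` has prime total degree and is a weak variable (i.e.
`J(H,G)` is a nonzero constant for some `G`), then the degree form of `H` is, up to a
constant factor, a power of a linear form. -/
theorem weak_variable_prime_degree_form
    {k : Type*} [Field k] [IsAlgClosed k] [CharZero k]
    (H G : MvPolynomial (Fin 2) k) (hp : Nat.Prime H.totalDegree)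
    (c : k) (hc : c ≠ 0)
    (hJ : MvPolynomial.pderiv 0 H * MvPolynomial.pderiv 1 G
        - MvPolynomial.pderiv 1 H * MvPolynomial.pderiv 0 G = MvPolynomial.C c) :
    ∃ u a b : k,
      MvPolynomial.homogeneousComponent H.totalDegree H
        = MvPolynomial.C u
          * (MvPolynomial.C a * MvPolynomial.X 0
              + MvPolynomial.C b * MvPolynomial.X 1) ^ H.totalDegree := by
  induction hq : G.totalDegree using Nat.strong_induction_on generalizing G with
  | _ q ih =>
  rcases MvPolynomial.degreeForm_eq_or_eq_C_mul_pow hp hc hJ with h | ⟨m, a, hm, hform⟩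
  · exact h
  · have hq0 := MvPolynomial.totalDegree_pos_of_jacobian_eq_C hc hJ
    refine ih _ (hq ▸ MvPolynomial.totalDegree_sub_C_mul_pow_lt hq0 hm hform)
      (G - MvPolynomial.C a * H ^ m) ?_ rfl
    exact (MvPolynomial.jacobian_sub_C_mul_pow_self H G a m).trans hJ
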